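/- arXiv:1702.01340 — 6 statements merged into one kernel-verified Lean document; each statement's English description precedes it below -/
import Mathlib

section
/- Let T be a string of length n over a linearly ordered alphabet and let M be the list of all n rotations of T sorted lexicographically (as a multiset). Then the string F formed by the first characters of the rows of M equals the string obtained by sorting the characters of T in nondecreasing order. -/
/-!
The lexicographic order compares first characters first, so sorting the rotations also sorts
their first characters; and the first characters of the rotations, taken in rotation order,
spell `T` itself. A sorted permutation of `T` is unique.
-/

/-- The list of all `n` rotations of a string `T` of length `n`:
the `i`-th rotation is `T[i..n−1]T[0..i−1]`. -/
def rotations {α : Type*} (T : List α) : List (List α) :=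
  (List.range T.length).map fun i => T.drop i ++ T.take i

/-- The matrix `M` of `T`: the multiset of all rotations of `T`,
sorted lexicographically. -/
def sortedRotations {α : Type*} [LinearOrder α] (T : List α) : List (List α) :=
  Multiset.sort (rotations T : Multiset (List α)) (· ≤ ·)

namespace List

variable {α : Type*} [LinearOrder α]

theorem head_le_head_of_le {a b : α} {l₁ l₂ : List α} (h : a :: l₁ ≤ b :: l₂) : a ≤ b := by
  rcases h.lt_or_eq with h | h
  · exact head_le_of_lt h
  · exact (cons_eq_cons.mp h).1.le

theorem Pairwise.filterMap_head? {L : List (List α)} (hL : L.Pairwise (· ≤ ·)) :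
    (L.filterMap head?).Pairwise (· ≤ ·) := by
  refine pairwise_filterMap.mpr (hL.imp fun {l₁ l₂} h a ha b hb => ?_)
  obtain ⟨l₁', rfl⟩ := head?_eq_some_iff.mp ha
  obtain ⟨l₂', rfl⟩ := head?_eq_some_iff.mp hb
  exact head_le_head_of_le h

end List

theorem map_head?_rotations {α : Type*} (T : List α) :
    (rotations T).map List.head? = T.map some := by
  refine List.ext_getElem (by simp [rotations]) fun i _ _ => ?_
  simp [rotations]

theorem filterMap_head?_rotations {α : Type*} (T : List α) :
    (rotations T).filterMap List.head? = T :=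
  calc (rotations T).filterMap List.head?
      _ = ((rotations T).map List.head?).filterMap id := by rw [List.filterMap_map]; rfl
      _ = T := by rw [map_head?_rotations, List.filterMap_map]; exact List.filterMap_some

/-- the string `F` of first characters of the lexicographically sorted
rotations of `T` equals the string obtained by sorting the characters of `T` in
nondecreasing order. -/
theorem first_column_eq_sorted {α : Type*} [LinearOrder α] (T : List α) :
    (sortedRotations T).filterMap List.head? = Multiset.sort (T : Multiset α) (· ≤ ·) := by
  have hrows : (sortedRotations T).Perm (rotations T) :=
    Multiset.coe_eq_coe.mp (Multiset.sort_eq _ _)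
  have hsort : T.Perm (Multiset.sort (T : Multiset α) (· ≤ ·)) :=
    (Multiset.coe_eq_coe.mp (Multiset.sort_eq _ _)).symm
  have hheads := hrows.filterMap List.head?
  rw [filterMap_head?_rotations] at hheads
  exact (hheads.trans hsort).eq_of_pairwise' (r := (· ≤ ·))
    (Multiset.pairwise_sort _ _).filterMap_head? (Multiset.pairwise_sort _ _)
end

section
/- Let L be any string of length n over a linearly ordered alphabet, and define LF : {0,...,n−1} → {0,...,n−1} by LF(i) = |{ j : L[j] < L[i] }| + |{ j < i : L[j] = L[i] }|. Then LF is a bijection of {0,...,n−1} onto itself. -/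
/-- The last-to-first map of a string `L` of length `n`:
`LF(i) = |{ j : L[j] < L[i] }| + |{ j < i : L[j] = L[i] }|` (0-based positions). -/
def lfMap {α : Type*} [LinearOrder α] (L : List α) (i : Fin L.length) : ℕ :=
  (Finset.univ.filter fun j : Fin L.length => L.get j < L.get i).card +
  (Finset.univ.filter fun j : Fin L.length => (j : ℕ) < (i : ℕ) ∧ L.get j = L.get i).card

private def lfSet {α : Type*} [LinearOrder α] (L : List α) (i : Fin L.length) :
    Finset (Fin L.length) :=
  Finset.univ.filter fun j => L.get j < L.get i ∨ ((j : ℕ) < (i : ℕ) ∧ L.get j = L.get i)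

private lemma lfMap_eq_card {α : Type*} [LinearOrder α] (L : List α) (i : Fin L.length) :
    lfMap L i = (lfSet L i).card := by
  unfold lfMap lfSet
  rw [Finset.filter_or, Finset.card_union_of_disjoint]
  rw [Finset.disjoint_filter]
  intro j _ hlt ⟨_, heq⟩
  exact absurd heq (ne_of_lt hlt)

private lemma lf_strict_mono {α : Type*} [LinearOrder α] (L : List α) (i j : Fin L.length)
    (h : L.get i < L.get j ∨ (L.get i = L.get j ∧ (i : ℕ) < (j : ℕ))) :
    lfMap L i < lfMap L j := by
  rw [lfMap_eq_card, lfMap_eq_card]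
  have hi : i ∉ lfSet L i := by
    simp [lfSet]
  have hsub : insert i (lfSet L i) ⊆ lfSet L j := by
    intro k hk
    rcases Finset.mem_insert.mp hk with rfl | hk
    · simp only [lfSet, Finset.mem_filter, Finset.mem_univ, true_and]
      rcases h with h | ⟨h1, h2⟩
      · exact Or.inl h
      · exact Or.inr ⟨h2, h1⟩
    · simp only [lfSet, Finset.mem_filter, Finset.mem_univ, true_and] at hk ⊢
      rcases hk with hk | ⟨hk1, hk2⟩
      · left
        rcases h with h | ⟨h, _⟩
        · exact lt_trans hk h
        · exact h ▸ hk
      · rcases h with h | ⟨h, h2⟩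
        · exact Or.inl (hk2 ▸ h)
        · exact Or.inr ⟨lt_trans hk1 h2, hk2.trans h⟩
  calc (lfSet L i).card < (insert i (lfSet L i)).card := by
        rw [Finset.card_insert_of_notMem hi]; omega
    _ ≤ (lfSet L j).card := Finset.card_le_card hsub

private lemma lfMap_lt {α : Type*} [LinearOrder α] (L : List α) (i : Fin L.length) :
    lfMap L i < L.length := by
  rw [lfMap_eq_card]
  have hi : i ∉ lfSet L i := by simp [lfSet]
  calc (lfSet L i).card < (insert i (lfSet L i)).card := by
        rw [Finset.card_insert_of_notMem hi]; omega
    _ ≤ (Finset.univ : Finset (Fin L.length)).card := Finset.card_le_card (Finset.subset_univ _)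
    _ = L.length := by simp

/-- the LF map of any string `L` of length `n` is a bijection of
`{0,...,n−1}` onto itself, i.e. it is realized by a permutation of `Fin n`. -/
theorem lf_bijective {α : Type*} [LinearOrder α] (L : List α) :
    ∃ e : Equiv.Perm (Fin L.length), ∀ i : Fin L.length, (e i : ℕ) = lfMap L i := by
  set f : Fin L.length → Fin L.length := fun i => ⟨lfMap L i, lfMap_lt L i⟩ with hf
  have hinj : Function.Injective f := by
    intro i j hij
    have heq : lfMap L i = lfMap L j := congrArg Fin.val hij
    by_contra hne
    rcases lt_trichotomy (L.get i) (L.get j) with h | h | h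
    · exact absurd heq (ne_of_lt (lf_strict_mono L i j (Or.inl h)))
    · rcases lt_trichotomy (i : ℕ) (j : ℕ) with h2 | h2 | h2
      · exact absurd heq (ne_of_lt (lf_strict_mono L i j (Or.inr ⟨h, h2⟩)))
      · exact hne (Fin.ext h2)
      · exact absurd heq.symm (ne_of_lt (lf_strict_mono L j i (Or.inr ⟨h.symm, h2⟩)))
    · exact absurd heq.symm (ne_of_lt (lf_strict_mono L j i (Or.inl h)))
  exact ⟨Equiv.ofBijective f (Finite.injective_iff_bijective.mp hinj), fun i => rfl⟩
end

section
/- Let L be any string of length n over a linearly ordered alphabet, let F be the string obtained by sorting the characters of L in nondecreasing order, and let LF be the last-to-first map of L. Then F[LF(i)] = L[i] for every 0 ≤ i < n. -/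
open Finset

namespace List

theorem card_filter_get_eq_countP {α : Type*} (L : List α) (p : α → Prop) [DecidablePred p] :
    #{j : Fin L.length | p (L.get j)} = L.countP p := by
  conv_rhs => rw [← Multiset.coe_countP, ← ofFn_get L, ← Fin.univ_val_map, Multiset.countP_map]
  rfl

section Sorted

variable {α : Type*} [Preorder α] {S : List α} {k : ℕ}

theorem Pairwise.le_getElem_of_mem_take (hS : S.Pairwise (· ≤ ·)) (hk : k < S.length) {a : α}
    (ha : a ∈ S.take k) : a ≤ S[k] := by
  rw [← take_append_drop k S, pairwise_append] at hS
  exact hS.2.2 a ha _ (drop_eq_getElem_cons hk ▸ mem_cons_self)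

theorem Pairwise.getElem_le_of_mem_drop (hS : S.Pairwise (· ≤ ·)) (hk : k < S.length) {a : α}
    (ha : a ∈ S.drop k) : S[k] ≤ a := by
  have hdrop := hS.sublist (drop_sublist k S)
  rw [drop_eq_getElem_cons hk] at ha hdrop
  rcases mem_cons.1 ha with rfl | ha
  · exact le_rfl
  · exact rel_of_pairwise_cons hdrop ha

theorem Pairwise.lt_countP_iff (hS : S.Pairwise (· ≤ ·)) {p : α → Prop} [DecidablePred p]
    (hp : Antitone p) (hk : k < S.length) : k < S.countP p ↔ p S[k] := by
  have hsplit : S.countP p = (S.take k).countP p + (S.drop k).countP p := by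
    rw [← countP_append, take_append_drop]
  constructor
  · intro hlt
    by_contra hnot
    have hdrop : (S.drop k).countP p = 0 := countP_eq_zero.2 fun a ha hpa =>
      hnot (hp (hS.getElem_le_of_mem_drop hk ha) (of_decide_eq_true hpa))
    have htake : (S.take k).countP p ≤ k := countP_le_length.trans (length_take_le k S)
    omega
  · intro hpk
    have htake : (S.take k).countP p = k := by
      rw [countP_eq_length.2 fun a ha => decide_eq_true (hp (hS.le_getElem_of_mem_take hk ha) hpk),
        length_take_of_le hk.le]
    have hdrop : 0 < (S.drop k).countP p :=
      countP_pos_iff.2 ⟨S[k], drop_eq_getElem_cons hk ▸ mem_cons_self, decide_eq_true hpk⟩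
    omega

end Sorted

end List

section LFMap

variable {α : Type*} [LinearOrder α] (L : List α) (i : Fin L.length)

theorem card_filter_lt_le_lfMap : #{j | L.get j < L.get i} ≤ lfMap L i :=
  Nat.le_add_right _ _

theorem lfMap_lt_card_filter_le : lfMap L i < #{j | L.get j ≤ L.get i} := by
  rw [lfMap, ← card_union_of_disjoint (disjoint_filter.2 fun j _ hlt heq => hlt.ne heq.2)]
  refine card_lt_card ((ssubset_iff_of_subset ?_).2 ⟨i, by simp, by simp⟩)
  intro j
  simp only [mem_union, mem_filter, mem_univ, true_and]
  rintro (hlt | ⟨-, heq⟩)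
  · exact hlt.le
  · exact heq.le

end LFMap

/-- if `F` is the string obtained by sorting the characters of `L`
in nondecreasing order, then `F[LF(i)] = L[i]` for every position `i` of `L`. -/
theorem sorted_at_lf {α : Type*} [LinearOrder α] (L : List α) (i : Fin L.length) :
    (Multiset.sort (L : Multiset α) (· ≤ ·))[lfMap L i]? = some (L.get i) := by
  set S := Multiset.sort (L : Multiset α) (· ≤ ·)
  have hS : S.Pairwise (· ≤ ·) := Multiset.pairwise_sort _ _
  have hcount (p : α → Prop) [DecidablePred p] : #{j | p (L.get j)} = S.countP p := by
    rw [List.card_filter_get_eq_countP, (Multiset.coe_eq_coe.1 (Multiset.sort_eq _ _)).countP_eq]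
  have hlower : S.countP (· < L.get i) ≤ lfMap L i :=
    hcount (· < L.get i) ▸ card_filter_lt_le_lfMap L i
  have hupper : lfMap L i < S.countP (· ≤ L.get i) :=
    hcount (· ≤ L.get i) ▸ lfMap_lt_card_filter_le L i
  have hk : lfMap L i < S.length := hupper.trans_le List.countP_le_length
  rw [List.getElem?_eq_getElem hk, Option.some_inj]
  exact le_antisymm ((hS.lt_countP_iff antitone_le hk).1 hupper)
    (not_lt.1 fun hlt => hlower.not_gt ((hS.lt_countP_iff antitone_lt hk).2 hlt))
end

section
/- Let T be a string of length n over a linearly ordered alphabet such that all n rotations of T are pairwise distinct, let R_0 < R_1 < ... < R_{n−1} be the rotations of T in lexicographic order, let L be the string with L[i] equal to the last character of R_i, and let LF be the last-to-first map of L. Then for every 0 ≤ i < n, the rotation obtained from R_i by moving its last character to the front equals R_{LF(i)}. -/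
/-- The Burrows-Wheeler transform of `T`: the last characters of the
lexicographically sorted rotations of `T` (the string `L` with `L[i]` the last
character of `R_i`). -/
def bwt {α : Type*} [LinearOrder α] (T : List α) : List α :=
  (sortedRotations T).filterMap List.getLast?

/-!
Write `g R` for `R` with its last character moved to the front. Rotations of `T` all have the
same length, so for two of them `g R < g x` iff `(last R, R) < (last x, x)` lexicographically;
for the sorted rows `R_m` this key is `(L[m], m)`. As `g` permutes the rotations, the row index
of `g R_i` is the number of rows `R_m` with `g R_m < g R_i`, that is the number of `m` with
`(L[m], m) < (L[i], i)`, which is `LF(i)`.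
-/

open Finset

namespace List

theorem append_lt_append_iff_of_length_eq {α : Type*} [LinearOrder α] {s t : List α}
    (h : s.length = t.length) (u v : List α) :
    s ++ u < t ++ v ↔ s < t ∨ s = t ∧ u < v := by
  induction s generalizing t with
  | nil => cases t <;> simp_all
  | cons a s ih =>
    cases t with
    | nil => simp at h
    | cons b t =>
      simp only [cons_append, cons_lt_cons_iff, ih (Nat.succ.inj h), cons.injEq]
      tauto

theorem rotate_length_sub_one_append_singleton {α : Type*} (s : List α) (a : α) :
    (s ++ [a]).rotate ((s ++ [a]).length - 1) = a :: s := by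
  simp

theorem rotate_length_sub_one_lt_iff {α : Type*} [LinearOrder α] {R x : List α}
    (h : R.length = x.length) (d : α) :
    R.rotate (R.length - 1) < x.rotate (x.length - 1) ↔
      R.getLastD d < x.getLastD d ∨ R.getLastD d = x.getLastD d ∧ R < x := by
  rcases eq_nil_or_concat' R with rfl | ⟨s, a, rfl⟩
  · rw [eq_comm, length_nil, length_eq_zero_iff] at h
    simp [h]
  rcases eq_nil_or_concat' x with rfl | ⟨t, b, rfl⟩
  · simp at h
  rw [rotate_length_sub_one_append_singleton, rotate_length_sub_one_append_singleton,
    cons_lt_cons_iff, getLastD_concat, getLastD_concat,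
    append_lt_append_iff_of_length_eq (by simpa using h)]
  by_cases hab : a = b
  · subst hab
    simp
  · simp [hab]

end List

theorem rotations_eq_cyclicPermutations {α : Type*} {T : List α} (hT : T ≠ []) :
    rotations T = T.cyclicPermutations := by
  refine List.ext_getElem (by simp [rotations, List.length_cyclicPermutations_of_ne_nil _ hT])
    fun k hk _ => ?_
  simp only [rotations, List.getElem_map, List.getElem_range, List.getElem_cyclicPermutations]
  rw [List.rotate_eq_drop_append_take (by simpa [rotations] using hk.le)]

theorem mem_rotations_iff_isRotated {α : Type*} {T R : List α} (hT : T ≠ []) :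
    R ∈ rotations T ↔ R ~r T := by
  rw [rotations_eq_cyclicPermutations hT, List.mem_cyclicPermutations_iff]

theorem lfMap_map {β α : Type*} [LinearOrder α] (S : List β) (f : β → α) (i : Fin S.length) :
    lfMap (S.map f) (i.cast (S.length_map f).symm) =
      #{m : Fin S.length | f S[m] < f S[i]} + #{m : Fin S.length | m < i ∧ f S[m] = f S[i]} := by
  unfold lfMap
  congr 1 <;>
    exact card_equiv (finCongr (S.length_map f)) (by simp [Fin.lt_def, -Fin.val_fin_lt])

theorem List.SortedLT.card_filter_getElem_lt {β : Type*} [LinearOrder β] {S : List β}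
    (hS : S.SortedLT) (j : Fin S.length) : #{m : Fin S.length | S[m] < S[j]} = j :=
  calc #{m : Fin S.length | S[m] < S[j]} = #{m | m < j} :=
        congrArg card (Finset.filter_congr fun m _ => hS.strictMono_get.lt_iff_lt)
    _ = j := by rw [filter_gt_eq_Iio, Fin.card_Iio]

section LexKey

variable {β α : Type*} [LinearOrder β] [LinearOrder α] {S : List β} {f : β → α} {g : β → β}

theorem injOn_of_lt_iff_lex
    (hg : ∀ R ∈ S, ∀ x ∈ S, g R < g x ↔ f R < f x ∨ f R = f x ∧ R < x) :
    Set.InjOn g {R | R ∈ S} := by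
  intro R hR x hx hgRx
  by_contra hne
  wlog hlt : R < x generalizing R x
  · exact this hx hR hgRx.symm (Ne.symm hne) ((Ne.lt_or_gt hne).resolve_left hlt)
  have h₁ := hg R hR x hx
  have h₂ := hg x hx R hR
  simp only [hgRx, lt_irrefl, hlt, not_lt_of_gt hlt, and_true, and_false, or_false,
    false_iff] at h₁ h₂
  exact h₁ (lt_or_eq_of_le (not_lt.mp h₂))

theorem getElem?_lfMap_map (hS : S.SortedLT) (hgS : ∀ R ∈ S, g R ∈ S)
    (hg : ∀ R ∈ S, ∀ x ∈ S, g R < g x ↔ f R < f x ∨ f R = f x ∧ R < x)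
    (i : Fin (S.map f).length) : S[lfMap (S.map f) i]? = S[(i : ℕ)]?.map g := by
  obtain ⟨i, rfl⟩ : ∃ i' : Fin S.length, i = i'.cast (S.length_map f).symm :=
    ⟨i.cast (S.length_map f), rfl⟩
  choose σ hσ using fun m : Fin S.length => List.mem_iff_get.mp (hgS _ (S.getElem_mem m.2))
  simp only [List.get_eq_getElem] at hσ
  have hσ_inj : σ.Injective := fun m m' h => hS.strictMono_get.injective <|
    injOn_of_lt_iff_lex hg (S.getElem_mem m.2) (S.getElem_mem m'.2)
      (by simp only [List.get_eq_getElem, ← hσ, h])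
  let e := Equiv.ofBijective σ (Finite.injective_iff_bijective.mp hσ_inj)
  have hlf : lfMap (S.map f) (i.cast (S.length_map f).symm) = σ i :=
    calc lfMap (S.map f) (i.cast (S.length_map f).symm)
        = #{m : Fin S.length | g S[m] < g S[i]} := by
          rw [lfMap_map, ← card_union_of_disjoint, ← filter_or]
          · refine congrArg card (filter_congr fun m _ => ?_)
            simp only [Fin.getElem_fin]
            rw [hg _ (S.getElem_mem _) _ (S.getElem_mem _), hS.getElem_lt_getElem_iff,
              Fin.lt_def]
            tauto
          · exact disjoint_filter.mpr fun m _ hlt heq => hlt.ne heq.2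
      _ = #{m : Fin S.length | S[m] < S[σ i]} :=
          card_equiv e fun m => by simp [e, ← hσ]
      _ = σ i := hS.card_filter_getElem_lt (σ i)
  simp [hlf, ← hσ]

end LexKey

/-- if all rotations of `T` are pairwise distinct, `R_0 < ⋯ < R_{n−1}`
are the sorted rotations, `L` is the string of their last characters and `LF` is the
last-to-first map of `L`, then for every `i` the rotation obtained from `R_i` by moving
its last character to the front (i.e. rotating `R_i` by `|R_i| − 1`) equals `R_{LF(i)}`. -/
theorem lf_moves_last_to_front {α : Type*} [LinearOrder α] (T : List α)
    (hdist : (rotations T).Nodup) (i : Fin (bwt T).length) :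
    (sortedRotations T)[lfMap (bwt T) i]? =
      ((sortedRotations T)[(i : ℕ)]?).map (fun R => R.rotate (R.length - 1)) := by
  set S := sortedRotations T
  have hT : T ≠ [] := by
    rintro rfl
    simpa [bwt, sortedRotations, rotations] using i.2
  have hmem : ∀ R, R ∈ S ↔ R ~r T := fun R =>
    (Multiset.mem_sort _).trans (Multiset.mem_coe.trans (mem_rotations_iff_isRotated hT))
  have hlen : ∀ R ∈ S, R.length = T.length := fun R hR => ((hmem R).mp hR).perm.length_eq
  have hS : S.SortedLT := (Multiset.pairwise_sort _ _).sortedLE.sortedLT_of_nodup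
    ((Multiset.coe_eq_coe.mp (Multiset.sort_eq _ _)).nodup_iff.mpr hdist)
  let d := T.head hT
  have hbwt : bwt T = S.map (·.getLastD d) := by
    refine List.filterMap_eq_map_iff_forall_eq_some.mpr fun R hR => ?_
    have hR : R ≠ [] := by
      rintro rfl
      exact hT (List.length_eq_zero_iff.mp (hlen [] hR).symm)
    simp [List.getLast?_eq_some_getLast hR]
  generalize hL : bwt T = L at i ⊢
  rw [hbwt] at hL
  subst hL
  refine getElem?_lfMap_map hS (fun R hR => ?_) (fun R hR x hx => ?_) i
  · exact (hmem _).mpr ((List.IsRotated.forall R _).trans ((hmem R).mp hR))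
  · exact List.rotate_length_sub_one_lt_iff ((hlen R hR).trans (hlen x hx).symm) d
end

section
/- (Correctness of the online left-extension step of BWT construction.) Let Σ be a linearly ordered alphabet with minimum element #, let V be a (possibly empty) string over Σ∖{#}, and let a ∈ Σ∖{#}. Let B = BWT(V#), let p be the unique position with B[p] = #, and let B' be B with the character at position p replaced by a. Let q = |{ j : B'[j] < a }| + |{ j ≤ p : B'[j] = a }|. Then the string obtained by inserting # into B' at position q (so that # becomes the q-th character, 0-based) equals BWT(aV#). -/
/-!
Write `T = V#` and `W = aT`. Besides `W` itself, the rotations of `W` are the rotations of `T`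
with `a` inserted right after `#`. Since `#` is the unique minimal letter, two rotations of `T`
are compared either before their `#` or, if the `#` sits at the same place, on what follows it,
so inserting `a` preserves their order. Hence the sorted rotations of `W` are the extended sorted
rotations of `T` with `W` inserted at its rank `q₀`; their last letters are those of `T`, except
that the `#` of the row `T` becomes `a`, i.e. `B'` with `#` inserted at position `q₀`.

It remains to see `q₀ = q` (the LF-mapping). Shifting the start by one position, the rotation of
`W` starting at `j + 1` is smaller than `W` iff the rotation of `T` starting at `j + 1`, preceded
by its last letter `c` (with `#` read as `a`), is at most `aT`, that is, iff `c < a`, or `c = a`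
and the rotation is at most `T`, i.e. lies at a row `≤ p` of the matrix of `T`.
-/

open List

namespace List

variable {α : Type*} [LinearOrder α] {s : α}

theorem append_cons_lt_append_cons_iff (hs : ∀ x, s ≤ x) {u v : List α} (hu : s ∉ u)
    (hv : s ∉ v) (x y : List α) :
    u ++ s :: x < v ++ s :: y ↔ u ++ [s] < v ++ [s] ∨ u = v ∧ x < y := by
  induction u generalizing v with
  | nil =>
    cases v with
    | nil => simp
    | cons c v =>
      have hc : s < c := (hs c).lt_of_ne fun h => hv (h ▸ mem_cons_self)
      simp [cons_lt_cons_iff, hc]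
  | cons b u ih =>
    have hb : s < b := (hs b).lt_of_ne fun h => hu (h ▸ mem_cons_self)
    cases v with
    | nil => simp [cons_lt_cons_iff, hb.not_gt, hb.ne']
    | cons c v =>
      simp only [cons_append, cons_lt_cons_iff, cons.injEq,
        ih (fun h => hu (mem_cons_of_mem b h)) (fun h => hv (mem_cons_of_mem c h))]
      tauto

theorem append_cons_lt_append_cons_iff_of_ne (hs : ∀ x, s ≤ x) {u v : List α} (hu : s ∉ u)
    (hv : s ∉ v) (huv : u ≠ v) (x y : List α) :
    u ++ s :: x < v ++ s :: y ↔ u ++ [s] < v ++ [s] := by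
  rw [append_cons_lt_append_cons_iff hs hu hv]
  simp only [huv, false_and, or_false]

theorem append_cons_le_append_cons_iff_of_ne (hs : ∀ x, s ≤ x) {u v : List α} (hu : s ∉ u)
    (hv : s ∉ v) (huv : u ≠ v) (x y : List α) :
    u ++ s :: x ≤ v ++ s :: y ↔ u ++ [s] < v ++ [s] := by
  rw [← not_lt, append_cons_lt_append_cons_iff_of_ne hs hv hu huv.symm, not_lt,
    le_iff_lt_or_eq, append_cancel_right_eq, or_iff_left huv]

theorem map_orderedInsert_eq_insertIdx {β γ : Type*} [LinearOrder β] {l : List β}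
    (hl : l.Pairwise (· ≤ ·)) (w : β) (f : β → γ) :
    (l.orderedInsert (· ≤ ·) w).map f = (l.map f).insertIdx (l.countP (· < w)) (f w) := by
  induction l with
  | nil => simp
  | cons b l ih =>
    rw [pairwise_cons] at hl
    by_cases hwb : w ≤ b
    · have : l.countP (· < w) = 0 :=
        countP_eq_zero.2 fun c hc => by simpa using hwb.trans (hl.1 c hc)
      simp [hwb, this]
    · simp [hwb, lt_of_not_ge hwb, ih hl.2, insertIdx_succ_cons]

theorem getLast?_cons_take {β : Type*} (x : β) (l : List β) {j : ℕ} (hj : j ≤ l.length) :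
    (x :: l.take j).getLast? = some ((x :: l)[j]'(by simp; omega)) := by
  rw [← take_succ_cons, getLast?_take]
  simp [getElem?_eq_getElem (show j < (x :: l).length by simpa using Nat.lt_succ_of_le hj)]

end List

theorem Multiset.sort_coe_eq_of_perm {β : Type*} [LinearOrder β] {l m : List β} (h : l ~ m)
    (hl : l.Pairwise (· ≤ ·)) : Multiset.sort (m : Multiset β) (· ≤ ·) = l :=
  Perm.eq_of_pairwise' (Multiset.pairwise_sort _ _) hl
    ((Multiset.coe_eq_coe.1 (Multiset.sort_eq _ _)).trans h.symm)

open Finset in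
theorem card_filter_eq_of_perm_finRange {n ℓ : ℕ} {J : List (Fin n)} (hJ : J ~ finRange n)
    (hℓ : ℓ = J.length) {P : Fin ℓ → Prop} {Q : Fin n → Prop} [DecidablePred P]
    [DecidablePred Q] (hPQ : ∀ k : Fin ℓ, P k ↔ Q (J[(k : ℕ)]'(hℓ ▸ k.2))) :
    #{k | P k} = #{j | Q j} :=
  card_equiv ((finCongr hℓ).trans ((hJ.nodup_iff.2 (nodup_finRange n)).getEquivOfForallMemList J
    fun j => hJ.mem_iff.2 (mem_finRange j))) (by simp [hPQ])

namespace Bwt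

section Rotations

variable {α : Type*} (s a : α) (V : List α)

/-- `rot s V j` is the rotation of `V ++ [s]` starting at position `j`, and `extRot s a V j`
the rotation of `a :: (V ++ [s])` starting at position `j + 1`. -/
def rot (j : Fin (V.length + 1)) : List α := V.drop j ++ s :: V.take j

def extRot (j : Fin (V.length + 1)) : List α := V.drop j ++ s :: a :: V.take j

theorem rot_zero : rot s V 0 = V ++ [s] := by simp [rot]

theorem rotations_append_singleton :
    rotations (V ++ [s]) = (finRange (V.length + 1)).map (rot s V) := by
  rw [rotations, length_append, length_singleton, ← map_coe_finRange_eq_range, map_map]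
  refine map_congr_left fun j _ => ?_
  simp [rot, drop_append_of_le_length (Nat.le_of_lt_succ j.2),
    take_append_of_le_length (Nat.le_of_lt_succ j.2)]

theorem rotations_cons_append_singleton :
    rotations (a :: (V ++ [s])) =
      (a :: (V ++ [s])) :: (finRange (V.length + 1)).map (extRot s a V) := by
  rw [rotations, length_cons, range_succ_eq_map, length_append, length_singleton,
    ← map_coe_finRange_eq_range]
  simp only [map_cons, map_map]
  refine congrArg₂ _ (by simp) (map_congr_left fun j _ => ?_)
  simp [extRot, drop_append_of_le_length (Nat.le_of_lt_succ j.2),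
    take_append_of_le_length (Nat.le_of_lt_succ j.2)]

theorem getLast?_rot (j : Fin (V.length + 1)) : (rot s V j).getLast? = some (s :: V)[j] := by
  rw [rot, getLast?_append_cons, getLast?_cons_take _ _ (Nat.le_of_lt_succ j.2)]
  rfl

theorem getLast?_extRot (j : Fin (V.length + 1)) :
    (extRot s a V j).getLast? = some (a :: V)[j] := by
  rw [extRot, getLast?_append_cons, getLast?_cons, getLast?_cons_take _ _ (Nat.le_of_lt_succ j.2)]
  rfl

variable {s V}

theorem rot_injective (hV : s ∉ V) : Function.Injective (rot s V) := by
  intro i j h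
  obtain ⟨hd, -⟩ :=
    (append_cons_inj_of_notMem (mt mem_of_mem_drop hV) (mt mem_of_mem_take hV)).1 h
  have := congrArg length hd
  simp only [length_drop] at this
  omega

end Rotations

section Order

variable {α : Type*} [LinearOrder α] {s : α} (a : α) {V : List α}

theorem rot_lt_rot_iff (hs : ∀ x, s ≤ x) (hV : s ∉ V) {i j : Fin (V.length + 1)} :
    rot s V i < rot s V j ↔ extRot s a V i < extRot s a V j := by
  rw [rot, rot, extRot, extRot,
    append_cons_lt_append_cons_iff hs (mt mem_of_mem_drop hV) (mt mem_of_mem_drop hV),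
    append_cons_lt_append_cons_iff hs (mt mem_of_mem_drop hV) (mt mem_of_mem_drop hV) (a :: _),
    cons_lt_cons_iff]
  simp

theorem extRot_last_lt (hs : ∀ x, s ≤ x) (ha : a ≠ s) :
    extRot s a V (Fin.last _) < a :: rot s V 0 := by
  simp [extRot, cons_lt_cons_iff, (hs a).lt_of_ne ha.symm]

theorem extRot_castSucc_lt_iff (hs : ∀ x, s ≤ x) (hV : s ∉ V) (ha : a ≠ s) (i : Fin V.length) :
    extRot s a V i.castSucc < a :: rot s V 0 ↔
      (a :: V)[i.succ] :: rot s V i.succ ≤ a :: rot s V 0 := by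
  have hW : a :: rot s V 0 = (a :: V) ++ s :: [] := by simp [rot_zero]
  have hshift : (a :: V)[i.succ] :: rot s V i.succ = V.drop i ++ s :: V.take (i + 1) := by
    rw [rot, drop_eq_getElem_cons i.2]
    rfl
  have hsaV : s ∉ a :: V := by simp [ha.symm, hV]
  have hne : V.drop i ≠ a :: V := fun h => by
    have := congrArg length h
    simp only [length_drop, length_cons] at this
    omega
  rw [hW, hshift, extRot, Fin.val_castSucc,
    append_cons_lt_append_cons_iff_of_ne hs (mt mem_of_mem_drop hV) hsaV hne,
    append_cons_le_append_cons_iff_of_ne hs (mt mem_of_mem_drop hV) hsaV hne]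

open Finset in
theorem card_extRot_lt (hs : ∀ x, s ≤ x) (hV : s ∉ V) (ha : a ≠ s) :
    #{j : Fin (V.length + 1) | extRot s a V j < a :: (V ++ [s])} =
      #{j : Fin (V.length + 1) | (a :: V)[j] < a} +
        #{j : Fin (V.length + 1) | rot s V j ≤ rot s V 0 ∧ (a :: V)[j] = a} := by
  have hsplit : #{j : Fin (V.length + 1) | (a :: V)[j] < a} +
      #{j : Fin (V.length + 1) | rot s V j ≤ rot s V 0 ∧ (a :: V)[j] = a} =
      #{j : Fin (V.length + 1) | (a :: V)[j] :: rot s V j ≤ a :: rot s V 0} := by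
    rw [← card_union_of_disjoint (disjoint_filter.2 fun j _ h₁ h₂ => h₁.ne h₂.2), ← filter_or]
    refine congrArg card (filter_congr fun j _ => ?_)
    simp only [le_iff_lt_or_eq, cons_lt_cons_iff, cons.injEq]
    tauto
  rw [hsplit, ← rot_zero, card_filter, card_filter, Fin.sum_univ_castSucc, Fin.sum_univ_succ,
    add_comm]
  congr 1
  · simp [extRot_last_lt a hs ha]
  · exact sum_congr rfl fun i _ => if_congr (extRot_castSucc_lt_iff a hs hV ha i) rfl rfl

end Order

section Sorting

variable {α : Type*} [LinearOrder α] (s a : α) (V : List α)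

def sortedIndices : List (Fin (V.length + 1)) :=
  (finRange (V.length + 1)).mergeSort fun i j => rot s V i ≤ rot s V j

theorem sortedIndices_perm : sortedIndices s V ~ finRange (V.length + 1) := mergeSort_perm _ _

variable {s V}

theorem pairwise_sortedIndices (hV : s ∉ V) :
    (sortedIndices s V).Pairwise fun i j => rot s V i < rot s V j := by
  have hle := pairwise_mergeSort (le := fun i j => decide (rot s V i ≤ rot s V j))
    (fun _ _ _ => by simpa using le_trans) (fun _ _ => by simpa using le_total _ _)
    (finRange (V.length + 1))
  refine (hle.and ((sortedIndices_perm s V).nodup_iff.2 (nodup_finRange _))).imp ?_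
  rintro i j ⟨hij, hne⟩
  exact (of_decide_eq_true hij).lt_of_ne ((rot_injective hV).ne hne)

theorem rot_getElem_sortedIndices_le_iff (hV : s ∉ V) {k l : ℕ}
    (hk : k < (sortedIndices s V).length) (hl : l < (sortedIndices s V).length) :
    rot s V (sortedIndices s V)[k] ≤ rot s V (sortedIndices s V)[l] ↔ k ≤ l := by
  have hmono : StrictMono fun k : Fin (sortedIndices s V).length =>
      rot s V (sortedIndices s V)[k] :=
    fun k l hkl => pairwise_iff_getElem.1 (pairwise_sortedIndices hV) k l k.2 l.2 hkl
  exact hmono.le_iff_le (a := ⟨k, hk⟩) (b := ⟨l, hl⟩)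

theorem sortedRotations_append_singleton (hV : s ∉ V) :
    sortedRotations (V ++ [s]) = (sortedIndices s V).map (rot s V) := by
  rw [sortedRotations, rotations_append_singleton]
  exact Multiset.sort_coe_eq_of_perm ((sortedIndices_perm s V).map _)
    (pairwise_map.2 ((pairwise_sortedIndices hV).imp le_of_lt))

theorem bwt_append_singleton (hV : s ∉ V) :
    bwt (V ++ [s]) = (sortedIndices s V).map fun j => (s :: V)[j] := by
  rw [bwt, sortedRotations_append_singleton hV, filterMap_map, ← filterMap_eq_map]
  exact filterMap_congr fun j _ => getLast?_rot s V j

theorem pairwise_map_extRot_sortedIndices (hs : ∀ x, s ≤ x) (hV : s ∉ V) :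
    ((sortedIndices s V).map (extRot s a V)).Pairwise (· ≤ ·) :=
  pairwise_map.2 ((pairwise_sortedIndices hV).imp fun h => ((rot_lt_rot_iff a hs hV).1 h).le)

theorem sortedRotations_cons_append_singleton (hs : ∀ x, s ≤ x) (hV : s ∉ V) :
    sortedRotations (a :: (V ++ [s])) =
      ((sortedIndices s V).map (extRot s a V)).orderedInsert (· ≤ ·) (a :: (V ++ [s])) := by
  rw [sortedRotations, rotations_cons_append_singleton]
  refine Multiset.sort_coe_eq_of_perm
    ((perm_orderedInsert _ _ _).trans (((sortedIndices_perm s V).map _).cons _)) ?_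
  exact (pairwise_map_extRot_sortedIndices a hs hV).orderedInsert _ _

open Finset in
theorem bwt_cons_append_singleton (hs : ∀ x, s ≤ x) (hV : s ∉ V) :
    bwt (a :: (V ++ [s])) = ((sortedIndices s V).map fun j => (a :: V)[j]).insertIdx
      #{j : Fin (V.length + 1) | extRot s a V j < a :: (V ++ [s])} s := by
  have hlast : ∀ X ∈
      ((sortedIndices s V).map (extRot s a V)).orderedInsert (· ≤ ·) (a :: (V ++ [s])),
      X.getLast? = some (X.getLastD s) := by
    intro X hX
    have hX : X ≠ [] := by
      rcases (mem_orderedInsert _).1 hX with rfl | hX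
      · simp
      · obtain ⟨j, -, rfl⟩ := mem_map.1 hX
        simp [extRot]
    rw [getLastD_eq_getLast?, getLast?_eq_some_getLast hX]
    rfl
  rw [bwt, sortedRotations_cons_append_singleton a hs hV, filterMap_congr hlast,
    filterMap_eq_map', map_orderedInsert_eq_insertIdx (pairwise_map_extRot_sortedIndices a hs hV),
    List.map_map, countP_map, (sortedIndices_perm s V).countP_eq]
  simp [Function.comp_def, getLast?_extRot, getLast?_cons, countP_eq_length_filter,
    Finset.card_def, Finset.filter_val, Fin.univ_def]
  -- the two counts differ only in their `Decidable` instances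
  congr!

theorem getElem?_sortedIndices_eq_zero (hV : s ∉ V) {p : ℕ}
    (hp : (bwt (V ++ [s]))[p]? = some s) : (sortedIndices s V)[p]? = some 0 := by
  rw [bwt_append_singleton hV, getElem?_map, Option.map_eq_some_iff] at hp
  obtain ⟨j, hj, hjs⟩ := hp
  rcases Fin.eq_zero_or_eq_succ j with rfl | ⟨i, rfl⟩
  · exact hj
  · simp only [Fin.getElem_fin, Fin.val_succ, getElem_cons_succ] at hjs
    exact absurd (hjs ▸ getElem_mem i.2) hV

theorem set_bwt_append_singleton (hV : s ∉ V) {p : ℕ} (hp : (bwt (V ++ [s]))[p]? = some s) :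
    (bwt (V ++ [s])).set p a = (sortedIndices s V).map fun j => (a :: V)[j] := by
  obtain ⟨hpJ, hJp⟩ := List.getElem?_eq_some_iff.1 (getElem?_sortedIndices_eq_zero hV hp)
  rw [bwt_append_singleton hV]
  refine ext_getElem (by simp) fun k h₁ h₂ => ?_
  simp only [getElem_set, getElem_map]
  split_ifs with hpk
  · subst hpk
    simp [hJp]
  · have hk : k < (sortedIndices s V).length := by simpa using h₂
    have hk0 : (sortedIndices s V)[k] ≠ 0 := fun hk0 => hpk <|
      ((sortedIndices_perm s V).nodup_iff.2 (nodup_finRange _)).getElem_inj_iff.1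
        (hJp.trans hk0.symm)
    obtain ⟨i, hi⟩ := (Fin.eq_zero_or_eq_succ _).resolve_left hk0
    simp only [Fin.getElem_fin, hi, Fin.val_succ, getElem_cons_succ]

end Sorting

end Bwt

/-- correctness of the online left-extension step of BWT construction.
Let `#` (here `sharp`) be the minimum of the alphabet, `V` a string over `Σ∖{#}`,
and `a ∈ Σ∖{#}`. Let `B = BWT(V#)`, let `p` be the (unique) position with `B[p] = #`,
let `B'` be `B` with position `p` replaced by `a`, and let
`q = |{ j : B'[j] < a }| + |{ j ≤ p : B'[j] = a }|`. Then inserting `#` into `B'` at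
position `q` yields `BWT(aV#)`. -/
theorem bwt_online_extension {α : Type*} [LinearOrder α]
    (sharp : α) (hsharp : ∀ x : α, sharp ≤ x)
    (V : List α) (hV : sharp ∉ V) (a : α) (ha : a ≠ sharp)
    (p : ℕ) (hp : (bwt (V ++ [sharp]))[p]? = some sharp) :
    ((bwt (V ++ [sharp])).set p a).insertIdx
        ((Finset.univ.filter fun j : Fin ((bwt (V ++ [sharp])).set p a).length =>
            ((bwt (V ++ [sharp])).set p a).get j < a).card +
         (Finset.univ.filter fun j : Fin ((bwt (V ++ [sharp])).set p a).length =>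
            (j : ℕ) ≤ p ∧ ((bwt (V ++ [sharp])).set p a).get j = a).card)
        sharp =
      bwt (a :: (V ++ [sharp])) := by
  obtain ⟨_, hJp⟩ := List.getElem?_eq_some_iff.1 (Bwt.getElem?_sortedIndices_eq_zero hV hp)
  rw [Bwt.set_bwt_append_singleton a hV hp, Bwt.bwt_cons_append_singleton a hsharp hV,
    Bwt.card_extRot_lt a hsharp hV ha]
  congr 2
  · exact card_filter_eq_of_perm_finRange (Bwt.sortedIndices_perm _ _) (List.length_map _)
      fun k => by simp
  · refine card_filter_eq_of_perm_finRange (Bwt.sortedIndices_perm _ _) (List.length_map _)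
      fun k => ?_
    rw [← hJp, Bwt.rot_getElem_sortedIndices_le_iff hV]
    simp
end

section
/- Let Σ be an alphabet, let #, $ ∈ Σ be two distinct characters, and let T' be a string over Σ∖{#,$}. If the LZ77 parsing of T' has z' phrases, then the LZ77 parsing of the string #T'$ has at most z' + 2 phrases. -/
/-- `w` occurs in `s` starting at (0-based) position `k`. -/
def occursAt {α : Type*} (w s : List α) (k : ℕ) : Prop :=
  k + w.length ≤ s.length ∧ (s.drop k).take w.length = w

/-- `w` occurs at least twice in `s`. -/
def occursTwice {α : Type*} (w s : List α) : Prop :=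
  ∃ k₁ k₂ : ℕ, k₁ < k₂ ∧ occursAt w s k₁ ∧ occursAt w s k₂

/-- `IsLZ77From T s P` holds when `P` is a valid LZ77 parsing of the suffix of `T`
starting at position `s`, relative to the whole text `T`. A triple `⟨π, λ, c⟩` encodes
the phrase `ωc` where `ω = T[s..s+λ−1]`; condition (1): `ω = T[π..π+λ−1]` when `λ > 0`
(`π = ⊥` when `λ = 0`); condition (2): `ω` is the longest string occurring at least
twice in `ω₁c₁⋯ω` (the prefix of `T` up to and including `ω`), among those that can be
followed by a trailing character of a phrase. -/
def IsLZ77From {α : Type*} (T : List α) : ℕ → List (Option ℕ × ℕ × α) → Prop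
  | s, [] => s = T.length
  | s, (π, l, c) :: rest =>
      s + l + 1 ≤ T.length ∧
      T[s + l]? = some c ∧
      (l = 0 → π = none) ∧
      (0 < l → ∃ q, π = some q ∧ q + l ≤ T.length ∧
        (T.drop q).take l = (T.drop s).take l ∧
        occursTwice ((T.drop s).take l) (T.take (s + l))) ∧
      (∀ l', l < l' → s + l' + 1 ≤ T.length →
        ¬ occursTwice ((T.drop s).take l') (T.take (s + l'))) ∧
      IsLZ77From T (s + l + 1) rest

/-- `P` is the LZ77 parsing of the text `T`. -/
def IsLZ77 {α : Type*} (T : List α) (P : List (Option ℕ × ℕ × α)) : Prop :=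
  IsLZ77From T 0 P


/-!
Write `T = #T'$`. The first phrase of any LZ77 parsing is a single literal character, here `#`.
From then on the parsing of `T` starting at position `s + 1` runs in lockstep with the parsing
of `T'` starting at `s`: since `#` occurs in no factor of `T'`, a factor of `T'` occurs twice
in `#T'[..s + l]` exactly when it occurs twice in `T'[..s + l]`, so both parsings choose the
same phrase length, except possibly for a last phrase of `T` that reaches the end of `T'`,
after which only `$` is left. Hence `T` has at most one phrase more than `T'` after `#`.
-/

lemma occursAt_cons_succ_iff {α : Type*} (a : α) (w u : List α) (k : ℕ) :
    occursAt w (a :: u) (k + 1) ↔ occursAt w u k := by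
  simp only [occursAt, List.drop_succ_cons, List.length_cons, Nat.add_right_comm k 1,
    Nat.add_le_add_iff_right]

lemma mem_of_occursAt_cons_zero {α : Type*} {a : α} {w u : List α}
    (h : occursAt w (a :: u) 0) (hw : w ≠ []) : a ∈ w := by
  obtain ⟨b, t, rfl⟩ := List.exists_cons_of_ne_nil hw
  have h' := h.2
  simp only [List.drop_zero, List.length_cons, List.take_succ_cons, List.cons.injEq] at h'
  simp [h'.1]

lemma occursTwice_cons_iff {α : Type*} {a : α} {w : List α} (u : List α)
    (hw : w ≠ []) (ha : a ∉ w) :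
    occursTwice w (a :: u) ↔ occursTwice w u := by
  constructor
  · rintro ⟨_ | k₁, _ | k₂, hk, h₁, h₂⟩
    · exact absurd (mem_of_occursAt_cons_zero h₁ hw) ha
    · exact absurd (mem_of_occursAt_cons_zero h₁ hw) ha
    · omega
    · exact ⟨k₁, k₂, by omega, (occursAt_cons_succ_iff a w u k₁).mp h₁,
        (occursAt_cons_succ_iff a w u k₂).mp h₂⟩
  · rintro ⟨k₁, k₂, hk, h₁, h₂⟩
    exact ⟨k₁ + 1, k₂ + 1, by omega, (occursAt_cons_succ_iff a w u k₁).mpr h₁,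
      (occursAt_cons_succ_iff a w u k₂).mpr h₂⟩

lemma not_occursTwice_of_length_le {α : Type*} {w s : List α} (h : s.length ≤ w.length) :
    ¬ occursTwice w s := by
  rintro ⟨k₁, k₂, hk, -, hk₂, -⟩
  omega

lemma occursTwice_cons_append_iff {α : Type*} {a : α} {T' : List α} (u : List α)
    (ha : a ∉ T') {s l : ℕ} (hl : 0 < l) (hsl : s + l ≤ T'.length) :
    occursTwice (((a :: (T' ++ u)).drop (s + 1)).take l) ((a :: (T' ++ u)).take (s + 1 + l)) ↔
      occursTwice ((T'.drop s).take l) (T'.take (s + l)) := by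
  have hword : ((a :: (T' ++ u)).drop (s + 1)).take l = (T'.drop s).take l := by
    rw [List.drop_succ_cons, List.drop_append_of_le_length (by omega),
      List.take_append_of_le_length (by rw [List.length_drop]; omega)]
  have htext : (a :: (T' ++ u)).take (s + 1 + l) = a :: T'.take (s + l) := by
    rw [Nat.add_right_comm, List.take_succ_cons, List.take_append_of_le_length hsl]
  rw [hword, htext]
  refine occursTwice_cons_iff _ ?_ fun h => ha (List.mem_of_mem_drop (List.mem_of_mem_take h))
  rw [← List.length_pos_iff, List.length_take, List.length_drop]
  omega

namespace IsLZ77From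

variable {α : Type*}

lemma length_add_le {T : List α} {s : ℕ} {P : List (Option ℕ × ℕ × α)}
    (hP : IsLZ77From T s P) : P.length + s ≤ T.length := by
  induction P generalizing s with
  | nil => simp only [IsLZ77From] at hP; simp [hP]
  | cons phrase P ih =>
    obtain ⟨π, l, c⟩ := phrase
    have := ih hP.2.2.2.2.2
    simp only [List.length_cons]
    omega

lemma phrase_length_eq_or_end {a b : α} {T' : List α} (ha : a ∉ T') {s l l₂ : ℕ}
    {π π₂ : Option ℕ} {c c₂ : α} {P' P : List (Option ℕ × ℕ × α)}
    (hP' : IsLZ77From T' s ((π, l, c) :: P'))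
    (hP : IsLZ77From (a :: (T' ++ [b])) (s + 1) ((π₂, l₂, c₂) :: P)) :
    l = l₂ ∨ s + l₂ = T'.length := by
  obtain ⟨hlen', -, -, hprev', hmax', -⟩ := hP'
  obtain ⟨hlen, -, -, hprev, hmax, -⟩ := hP
  simp only [List.length_cons, List.length_append, List.length_nil] at hlen hmax
  have hle : l ≤ l₂ := by
    by_contra! hlt
    obtain ⟨-, -, -, -, htwice⟩ := hprev' (by omega)
    exact hmax l hlt (by omega)
      ((occursTwice_cons_append_iff _ ha (by omega) (by omega)).mpr htwice)
  rcases hle.eq_or_lt with heq | hlt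
  · exact .inl heq
  refine .inr (le_antisymm (by omega) (not_lt.mp fun hend => ?_))
  obtain ⟨-, -, -, -, htwice⟩ := hprev (by omega)
  exact hmax' l₂ hlt (by omega)
    ((occursTwice_cons_append_iff _ ha (by omega) (by omega)).mp htwice)

lemma length_le_of_cons_append {a b : α} {T' : List α} (ha : a ∉ T') :
    ∀ {s : ℕ} {P' P : List (Option ℕ × ℕ × α)}, IsLZ77From T' s P' →
      IsLZ77From (a :: (T' ++ [b])) (s + 1) P → P.length ≤ P'.length + 1
  | s, [], P, hP', hP => by
    have := hP.length_add_le
    simp only [IsLZ77From] at hP'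
    simp only [List.length_cons, List.length_append, List.length_nil] at this
    simp only [List.length_nil]
    omega
  | _, _ :: _, [], _, _ => by simp
  | s, (π, l, c) :: P', (π₂, l₂, c₂) :: P, hP', hP => by
    simp only [List.length_cons, Nat.add_le_add_iff_right]
    rcases phrase_length_eq_or_end ha hP' hP with rfl | hend
    · exact length_le_of_cons_append ha hP'.2.2.2.2.2
        (by simpa only [Nat.add_right_comm s 1 l] using hP.2.2.2.2.2)
    · have := hP.2.2.2.2.2.length_add_le
      simp only [List.length_cons, List.length_append, List.length_nil] at this
      omega

end IsLZ77From

/-- A nonempty first `ω` would have to occur twice in itself. -/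
lemma IsLZ77.first_phrase {α : Type*} {T : List α} {π : Option ℕ} {l : ℕ} {c : α}
    {P : List (Option ℕ × ℕ × α)} (hP : IsLZ77 T ((π, l, c) :: P)) :
    l = 0 ∧ IsLZ77From T 1 P := by
  obtain ⟨hlen, -, -, hprev, -, hrest⟩ := hP
  have hl : l = 0 := by
    by_contra hl
    obtain ⟨-, -, -, -, htwice⟩ := hprev (by omega)
    refine not_occursTwice_of_length_le ?_ htwice
    simp only [List.length_take, List.length_drop]
    omega
  subst hl
  exact ⟨rfl, hrest⟩

theorem lz77_terminators_add_two_general {α : Type*} (sharp dollar : α)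
    (T' : List α) (hsharp : sharp ∉ T')
    (P' : List (Option ℕ × ℕ × α)) (hP' : IsLZ77 T' P')
    (P : List (Option ℕ × ℕ × α)) (hP : IsLZ77 (sharp :: (T' ++ [dollar])) P) :
    P.length ≤ P'.length + 2 := by
  rcases P with _ | ⟨⟨_, _, _⟩, P⟩
  · simp
  obtain ⟨-, hrest⟩ := hP.first_phrase
  simpa using IsLZ77From.length_le_of_cons_append hsharp hP' hrest

/-- let `#` and `$` (here `sharp` and `dollar`) be two distinct
characters not occurring in the string `T'`. If the LZ77 parsing of `T'` has `z'`
phrases, then the LZ77 parsing of `#T'$` has at most `z' + 2` phrases. -/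
theorem lz77_terminators_add_two {α : Type*} (sharp dollar : α)
    (hdistinct : sharp ≠ dollar)
    (T' : List α) (hsharp : sharp ∉ T') (hdollar : dollar ∉ T')
    (P' : List (Option ℕ × ℕ × α)) (hP' : IsLZ77 T' P')
    (P : List (Option ℕ × ℕ × α)) (hP : IsLZ77 (sharp :: (T' ++ [dollar])) P) :
    P.length ≤ P'.length + 2 :=
  lz77_terminators_add_two_general sharp dollar T' hsharp P' hP' P hP
end
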